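/- arXiv:1107.5533 — 3 statements merged into one kernel-verified Lean document; each statement's English description precedes it below -/
import Mathlib

section
/- Let H be a connected graded commutative Hopf algebra over ℂ with grading operator Y (Y(a) = n·a for a ∈ Hₙ). For any algebra homomorphism φ: H → ℂ[z⁻¹][[z]], the map β(φ) := φ^{⋆−1} ⋆ (z·φ∘Y) is an infinitesimal character: β(φ)(ab) = β(φ)(a)ε(b) + ε(a)β(φ)(b). -/
open TensorProduct

variable {H : Type*} [CommRing H] [HopfAlgebra ℂ H]

/-- Convolution product of linear maps `H → A`: `f ⋆ g = m_A ∘ (f ⊗ g) ∘ Δ`. -/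
noncomputable def conv {A : Type*} [CommRing A] [Algebra ℂ A]
    (f g : H →ₗ[ℂ] A) : H →ₗ[ℂ] A :=
  (LinearMap.mul' ℂ A) ∘ₗ (TensorProduct.map f g) ∘ₗ (Coalgebra.comul (R := ℂ) (A := H))

namespace DrAux

open Coalgebra HopfAlgebra

variable {A : Type*} [CommRing A] [Algebra ℂ A]

/-- A representation of `comul (x*y)` built from representations of `comul x`, `comul y`. -/
noncomputable def mulRepr {ι κ : Type*} {x y : H} (rx : Coalgebra.Repr ℂ x ι) (ry : Coalgebra.Repr ℂ y κ) :
    Coalgebra.Repr ℂ (x * y) (ι × κ) where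
  index := rx.index ×ˢ ry.index
  left p := rx.left p.1 * ry.left p.2
  right p := rx.right p.1 * ry.right p.2
  eq := by
    rw [Finset.sum_product]
    simp_rw [← Algebra.TensorProduct.tmul_mul_tmul]
    rw [← Finset.sum_mul_sum]
    rw [rx.eq, ry.eq]
    exact (Bialgebra.comul_mul (R := ℂ) x y).symm

lemma repr_counit_left {ι : Type*} {a : H} (r : Coalgebra.Repr ℂ a ι) :
    ∑ i ∈ r.index, counit (R := ℂ) (r.left i) • r.right i = a := by
  have h := congrArg (TensorProduct.lid ℂ H) (Coalgebra.sum_counit_tmul_eq (R := ℂ) r)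
  simp only [map_sum, TensorProduct.lid_tmul, one_smul] at h
  exact h

lemma repr_counit_right {ι : Type*} {a : H} (r : Coalgebra.Repr ℂ a ι) :
    ∑ i ∈ r.index, counit (R := ℂ) (r.right i) • r.left i = a := by
  have h := congrArg (TensorProduct.rid ℂ H) (Coalgebra.sum_tmul_counit_eq (R := ℂ) r)
  simp only [map_sum, TensorProduct.rid_tmul, one_smul] at h
  exact h

/-- `∑ φ(S x₁) φ(x₂) = ε(x) • 1`. -/
lemma sum_antipode_phi (φ : H →ₐ[ℂ] A) {ι : Type*} {c : H} (r : Coalgebra.Repr ℂ c ι) :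
    ∑ i ∈ r.index, φ (antipode (R := ℂ) (r.left i)) * φ (r.right i)
      = counit (R := ℂ) c • (1 : A) := by
  have h := congrArg φ (sum_antipode_mul_eq_smul (R := ℂ) r)
  simp only [map_sum, map_mul, AlgHom.commutes, Algebra.algebraMap_eq_smul_one,
    map_smul, map_one] at h
  exact h

/-- `∑ φ(x₁) φ(S x₂) = ε(x) • 1`. -/
lemma sum_phi_antipode (φ : H →ₐ[ℂ] A) {ι : Type*} {c : H} (r : Coalgebra.Repr ℂ c ι) :
    ∑ i ∈ r.index, φ (r.left i) * φ (antipode (R := ℂ) (r.right i))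
      = counit (R := ℂ) c • (1 : A) := by
  have h := congrArg φ (sum_mul_antipode_eq_smul (R := ℂ) r)
  simp only [map_sum, map_mul, AlgHom.commutes, Algebra.algebraMap_eq_smul_one,
    map_smul, map_one] at h
  exact h

/-- trilinear evaluation map. -/
noncomputable def tri (f g h : H →ₗ[ℂ] A) : H ⊗[ℂ] (H ⊗[ℂ] H) →ₗ[ℂ] A :=
  LinearMap.mul' ℂ A ∘ₗ TensorProduct.map f (LinearMap.mul' ℂ A ∘ₗ TensorProduct.map g h)

@[simp] lemma tri_tmul (f g h : H →ₗ[ℂ] A) (x y z : H) :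
    tri f g h (x ⊗ₜ[ℂ] (y ⊗ₜ[ℂ] z)) = f x * (g y * h z) := rfl

lemma sum4_swap {α β : Type*} {γ : α → Type*} {δ : β → Type*}
    (sa : Finset α) (sb : Finset β) (ta : ∀ i, Finset (γ i)) (tb : ∀ j, Finset (δ j))
    (f : (i : α) → γ i → (j : β) → δ j → A) :
    (∑ i ∈ sa, ∑ k ∈ ta i, ∑ j ∈ sb, ∑ l ∈ tb j, f i k j l)
      = ∑ j ∈ sb, ∑ l ∈ tb j, ∑ i ∈ sa, ∑ k ∈ ta i, f i k j l := by
  trans ∑ x ∈ sa.sigma ta, ∑ y ∈ sb.sigma tb, f x.1 x.2 y.1 y.2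
  · conv_lhs => rw [Finset.sum_sigma']
    exact Finset.sum_congr rfl fun x _ => Finset.sum_sigma' sb tb (fun j l => f x.1 x.2 j l)
  · rw [Finset.sum_comm]
    conv_rhs => rw [Finset.sum_sigma']
    exact Finset.sum_congr rfl fun y _ => (Finset.sum_sigma' sa ta (fun i k => f i k y.1 y.2)).symm

theorem phiS_mul (φ : H →ₐ[ℂ] A) (a b : H) :
    φ (antipode (R := ℂ) (a * b)) = φ (antipode (R := ℂ) a) * φ (antipode (R := ℂ) b) := by
  classical
  set ψ : H →ₗ[ℂ] A := φ.toLinearMap ∘ₗ antipode (R := ℂ) with hψdef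
  have hψ : ∀ x : H, ψ x = φ (antipode (R := ℂ) x) := fun x => rfl
  let ra := ℛ ℂ a
  let rb := ℛ ℂ b
  let ra1 : ∀ i, Coalgebra.Repr ℂ (ra.left i) (H × H) := fun i => ℛ ℂ _
  let ra2 : ∀ i, Coalgebra.Repr ℂ (ra.right i) (H × H) := fun i => ℛ ℂ _
  let rb1 : ∀ j, Coalgebra.Repr ℂ (rb.left j) (H × H) := fun j => ℛ ℂ _
  let rb2 : ∀ j, Coalgebra.Repr ℂ (rb.right j) (H × H) := fun j => ℛ ℂ _
  -- the smash maps
  let Λb : H ⊗[ℂ] (H ⊗[ℂ] H) →ₗ[ℂ] A :=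
    ∑ j ∈ rb.index, ∑ l ∈ (rb2 j).index,
      tri (ψ ∘ₗ LinearMap.mulRight ℂ (rb.left j))
        (φ.toLinearMap ∘ₗ LinearMap.mulRight ℂ ((rb2 j).left l))
        (LinearMap.mulRight ℂ (ψ ((rb2 j).right l)) ∘ₗ ψ)
  have hΛb : ∀ x y z : H, Λb (x ⊗ₜ[ℂ] (y ⊗ₜ[ℂ] z)) =
      ∑ j ∈ rb.index, ∑ l ∈ (rb2 j).index,
        ψ (x * rb.left j) * (φ (y * (rb2 j).left l) * (ψ z * ψ ((rb2 j).right l))) := by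
    intro x y z
    simp only [Λb, LinearMap.sum_apply, tri_tmul, LinearMap.comp_apply,
      LinearMap.mulRight_apply, AlgHom.toLinearMap_apply]
  let Λa : H ⊗[ℂ] (H ⊗[ℂ] H) →ₗ[ℂ] A :=
    ∑ i ∈ ra.index, ∑ k ∈ (ra1 i).index,
      tri (ψ ∘ₗ LinearMap.mulLeft ℂ ((ra1 i).left k))
        (φ.toLinearMap ∘ₗ LinearMap.mulLeft ℂ ((ra1 i).right k))
        (LinearMap.mulRight ℂ (ψ (ra.right i)) ∘ₗ ψ)
  have hΛa : ∀ x y z : H, Λa (x ⊗ₜ[ℂ] (y ⊗ₜ[ℂ] z)) =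
      ∑ i ∈ ra.index, ∑ k ∈ (ra1 i).index,
        ψ ((ra1 i).left k * x) * (φ ((ra1 i).right k * y) * (ψ z * ψ (ra.right i))) := by
    intro x y z
    simp only [Λa, LinearMap.sum_apply, tri_tmul, LinearMap.comp_apply,
      LinearMap.mulLeft_apply, LinearMap.mulRight_apply, AlgHom.toLinearMap_apply]
  have hsmul : ∀ (r s : ℂ) (x : A), (r * s) • x = x * ((r • 1) * (s • 1)) := by
    intro r s x
    simp only [Algebra.smul_def, map_mul, mul_one]
    ring
  -- Step 1
  have hab : a * b = ∑ i ∈ ra.index, ∑ j ∈ rb.index,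
      (counit (R := ℂ) (ra.right i) * counit (R := ℂ) (rb.right j)) •
        (ra.left i * rb.left j) := by
    conv_lhs => rw [← repr_counit_right ra, ← repr_counit_right rb]
    rw [Finset.sum_mul_sum]
    exact Finset.sum_congr rfl fun i _ => Finset.sum_congr rfl fun j _ => by
      rw [smul_mul_assoc, mul_smul_comm, smul_smul]
  calc φ (antipode (R := ℂ) (a * b))
      = ∑ i ∈ ra.index, ∑ j ∈ rb.index,
          (counit (R := ℂ) (ra.right i) * counit (R := ℂ) (rb.right j)) •
            ψ (ra.left i * rb.left j) := by
        rw [← hψ, hab]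
        simp only [map_sum, map_smul]
    _ = ∑ i ∈ ra.index, ∑ j ∈ rb.index, ∑ k ∈ (ra2 i).index, ∑ l ∈ (rb2 j).index,
          ψ (ra.left i * rb.left j) *
            (φ ((ra2 i).left k * (rb2 j).left l) *
              (ψ ((ra2 i).right k) * ψ ((rb2 j).right l))) := by
        refine Finset.sum_congr rfl fun i _ => Finset.sum_congr rfl fun j _ => ?_
        rw [hsmul, ← sum_phi_antipode φ (ra2 i), ← sum_phi_antipode φ (rb2 j),
          Finset.sum_mul_sum, Finset.mul_sum]
        refine Finset.sum_congr rfl fun k _ => ?_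
        rw [Finset.mul_sum]
        refine Finset.sum_congr rfl fun l _ => ?_
        rw [map_mul φ ((ra2 i).left k) ((rb2 j).left l)]
        simp only [← hψ]
        ring
    _ = ∑ i ∈ ra.index, ∑ k ∈ (ra2 i).index, ∑ j ∈ rb.index, ∑ l ∈ (rb2 j).index,
          ψ (ra.left i * rb.left j) *
            (φ ((ra2 i).left k * (rb2 j).left l) *
              (ψ ((ra2 i).right k) * ψ ((rb2 j).right l))) := by
        exact Finset.sum_congr rfl fun i _ => Finset.sum_comm
    _ = Λb (∑ i ∈ ra.index, ∑ k ∈ (ra2 i).index,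
          ra.left i ⊗ₜ[ℂ] ((ra2 i).left k ⊗ₜ[ℂ] (ra2 i).right k)) := by
        rw [map_sum]
        refine (Finset.sum_congr rfl fun i _ => ?_).symm
        rw [map_sum]
        exact Finset.sum_congr rfl fun k _ => hΛb _ _ _
    _ = Λb (∑ i ∈ ra.index, ∑ k ∈ (ra1 i).index,
          (ra1 i).left k ⊗ₜ[ℂ] ((ra1 i).right k ⊗ₜ[ℂ] ra.right i)) := by
        rw [Coalgebra.sum_tmul_tmul_eq ra ra1 ra2]
    _ = ∑ i ∈ ra.index, ∑ k ∈ (ra1 i).index, ∑ j ∈ rb.index, ∑ l ∈ (rb2 j).index,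
          ψ ((ra1 i).left k * rb.left j) *
            (φ ((ra1 i).right k * (rb2 j).left l) *
              (ψ (ra.right i) * ψ ((rb2 j).right l))) := by
        rw [map_sum]
        refine Finset.sum_congr rfl fun i _ => ?_
        rw [map_sum]
        exact Finset.sum_congr rfl fun k _ => hΛb _ _ _
    _ = ∑ j ∈ rb.index, ∑ l ∈ (rb2 j).index, ∑ i ∈ ra.index, ∑ k ∈ (ra1 i).index,
          ψ ((ra1 i).left k * rb.left j) *
            (φ ((ra1 i).right k * (rb2 j).left l) *
              (ψ (ra.right i) * ψ ((rb2 j).right l))) := by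
        exact sum4_swap _ _ _ _ _
    _ = Λa (∑ j ∈ rb.index, ∑ l ∈ (rb2 j).index,
          rb.left j ⊗ₜ[ℂ] ((rb2 j).left l ⊗ₜ[ℂ] (rb2 j).right l)) := by
        rw [map_sum]
        refine (Finset.sum_congr rfl fun j _ => ?_).symm
        rw [map_sum]
        refine Finset.sum_congr rfl fun l _ => ?_
        rw [hΛa]
        refine Finset.sum_congr rfl fun i _ => Finset.sum_congr rfl fun k _ => by
          ring
    _ = Λa (∑ j ∈ rb.index, ∑ l ∈ (rb1 j).index,
          (rb1 j).left l ⊗ₜ[ℂ] ((rb1 j).right l ⊗ₜ[ℂ] rb.right j)) := by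
        rw [Coalgebra.sum_tmul_tmul_eq rb rb1 rb2]
    _ = ∑ j ∈ rb.index, ∑ l ∈ (rb1 j).index, ∑ i ∈ ra.index, ∑ k ∈ (ra1 i).index,
          ψ ((ra1 i).left k * (rb1 j).left l) *
            (φ ((ra1 i).right k * (rb1 j).right l) *
              (ψ (rb.right j) * ψ (ra.right i))) := by
        rw [map_sum]
        refine Finset.sum_congr rfl fun j _ => ?_
        rw [map_sum]
        exact Finset.sum_congr rfl fun l _ => hΛa _ _ _
    _ = ∑ i ∈ ra.index, ∑ j ∈ rb.index,
          ((∑ k ∈ (ra1 i).index, ∑ l ∈ (rb1 j).index,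
            ψ ((ra1 i).left k * (rb1 j).left l) *
              φ ((ra1 i).right k * (rb1 j).right l)) *
            (ψ (rb.right j) * ψ (ra.right i))) := by
        rw [sum4_swap]
        refine Finset.sum_congr rfl fun i _ => ?_
        rw [Finset.sum_comm]
        refine Finset.sum_congr rfl fun j _ => ?_
        rw [Finset.sum_mul]
        refine Finset.sum_congr rfl fun k _ => ?_
        rw [Finset.sum_mul]
        exact Finset.sum_congr rfl fun l _ => by ring
    _ = ∑ i ∈ ra.index, ∑ j ∈ rb.index,
          ((counit (R := ℂ) (ra.left i) • ψ (ra.right i)) *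
            (counit (R := ℂ) (rb.left j) • ψ (rb.right j))) := by
        refine Finset.sum_congr rfl fun i _ => Finset.sum_congr rfl fun j _ => ?_
        have hinner : (∑ k ∈ (ra1 i).index, ∑ l ∈ (rb1 j).index,
            ψ ((ra1 i).left k * (rb1 j).left l) *
              φ ((ra1 i).right k * (rb1 j).right l))
            = (counit (R := ℂ) (ra.left i) * counit (R := ℂ) (rb.left j)) • (1 : A) := by
          rw [← Finset.sum_product']
          have := sum_antipode_phi φ (mulRepr (ra1 i) (rb1 j))
          simp only [mulRepr] at this
          rw [← Bialgebra.counit_mul (R := ℂ)]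
          exact this
        rw [hinner, hsmul]
        simp only [smul_mul_assoc, one_mul, Algebra.smul_def]
        ring
    _ = φ (antipode (R := ℂ) a) * φ (antipode (R := ℂ) b) := by
        rw [← Finset.sum_mul_sum]
        have h1 : ∑ i ∈ ra.index, counit (R := ℂ) (ra.left i) • ψ (ra.right i) = ψ a := by
          simp_rw [← map_smul]
          rw [← map_sum]
          exact congrArg ψ (repr_counit_left ra)
        have h2 : ∑ j ∈ rb.index, counit (R := ℂ) (rb.left j) • ψ (rb.right j) = ψ b := by
          simp_rw [← map_smul]
          rw [← map_sum]
          exact congrArg ψ (repr_counit_left rb)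
        rw [h1, h2, hψ, hψ]

lemma conv_repr (f g : H →ₗ[ℂ] A) {ι : Type*} {c : H} (r : Coalgebra.Repr ℂ c ι) :
    conv f g c = ∑ i ∈ r.index, f (r.left i) * g (r.right i) := by
  simp only [conv, LinearMap.comp_apply]
  rw [← r.eq]
  simp only [map_sum, TensorProduct.map_tmul, LinearMap.mul'_apply]

theorem conv_infinitesimal (φ : H →ₐ[ℂ] A) (Y : H →ₗ[ℂ] H)
    (hYder : ∀ x y : H, Y (x * y) = Y x * y + x * Y y) (a b : H) :
    conv (φ.toLinearMap ∘ₗ antipode (R := ℂ)) (φ.toLinearMap ∘ₗ Y) (a * b)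
      = algebraMap ℂ A (counit (R := ℂ) b) *
          conv (φ.toLinearMap ∘ₗ antipode (R := ℂ)) (φ.toLinearMap ∘ₗ Y) a
      + algebraMap ℂ A (counit (R := ℂ) a) *
          conv (φ.toLinearMap ∘ₗ antipode (R := ℂ)) (φ.toLinearMap ∘ₗ Y) b := by
  classical
  set ψL : H →ₗ[ℂ] A := φ.toLinearMap ∘ₗ antipode (R := ℂ) with hψL
  set YL : H →ₗ[ℂ] A := φ.toLinearMap ∘ₗ Y with hYL
  have hψmul : ∀ x y : H, ψL (x * y) = ψL x * ψL y := fun x y => phiS_mul φ x y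
  have hYmul : ∀ x y : H, YL (x * y) = YL x * φ y + φ x * YL y := by
    intro x y
    show φ (Y (x * y)) = φ (Y x) * φ y + φ x * φ (Y y)
    rw [hYder, map_add, map_mul, map_mul]
  let ra := ℛ ℂ a
  let rb := ℛ ℂ b
  have hb1 : ∑ j ∈ rb.index, ψL (rb.left j) * φ (rb.right j)
      = counit (R := ℂ) b • (1 : A) := sum_antipode_phi φ rb
  have ha1 : ∑ i ∈ ra.index, ψL (ra.left i) * φ (ra.right i)
      = counit (R := ℂ) a • (1 : A) := sum_antipode_phi φ ra
  calc conv ψL YL (a * b)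
      = ∑ i ∈ ra.index, ∑ j ∈ rb.index,
          ψL (ra.left i * rb.left j) * YL (ra.right i * rb.right j) := by
        rw [conv_repr ψL YL (mulRepr ra rb)]
        simp only [mulRepr]
        rw [Finset.sum_product]
    _ = ∑ i ∈ ra.index, ∑ j ∈ rb.index,
          ((ψL (ra.left i) * YL (ra.right i)) * (ψL (rb.left j) * φ (rb.right j))
            + (ψL (ra.left i) * φ (ra.right i)) * (ψL (rb.left j) * YL (rb.right j))) := by
        refine Finset.sum_congr rfl fun i _ => Finset.sum_congr rfl fun j _ => ?_
        rw [hψmul, hYmul]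
        ring
    _ = (∑ i ∈ ra.index, ψL (ra.left i) * YL (ra.right i)) *
          (∑ j ∈ rb.index, ψL (rb.left j) * φ (rb.right j))
        + (∑ i ∈ ra.index, ψL (ra.left i) * φ (ra.right i)) *
          (∑ j ∈ rb.index, ψL (rb.left j) * YL (rb.right j)) := by
        simp_rw [Finset.sum_add_distrib]
        rw [Finset.sum_mul_sum, Finset.sum_mul_sum]
    _ = algebraMap ℂ A (counit (R := ℂ) b) * conv ψL YL a
          + algebraMap ℂ A (counit (R := ℂ) a) * conv ψL YL b := by
        rw [hb1, ha1, ← conv_repr ψL YL ra, ← conv_repr ψL YL rb,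
          ← Algebra.algebraMap_eq_smul_one, ← Algebra.algebraMap_eq_smul_one]
        ring

end DrAux

/-- let `H` be a connected graded commutative Hopf algebra with
grading operator `Y` (the derivation with `Y(a) = n·a` for `a ∈ Hₙ`, compatible
with the coproduct), and `A = ℂ[z⁻¹][[z]]` the Laurent series algebra.  For any
character `φ : H → A`, the map `β(φ) = φ^{⋆−1} ⋆ (z·(φ∘Y))` (with
`φ^{⋆−1} = φ ∘ S`) is an infinitesimal character:
`β(φ)(ab) = β(φ)(a)ε(b) + ε(a)β(φ)(b)`. -/
theorem dr_beta_is_infinitesimal_character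
    (𝒜 : ℕ → Submodule ℂ H) [GradedAlgebra 𝒜] (hconn : 𝒜 0 = 1)
    (Y : H →ₗ[ℂ] H)
    (hY : ∀ n : ℕ, ∀ a ∈ 𝒜 n, Y a = (n : ℂ) • a)
    (hYder : ∀ a b : H, Y (a * b) = Y a * b + a * Y b)
    (hYΔ : ∀ a : H, Coalgebra.comul (R := ℂ) (Y a)
      = ((TensorProduct.map Y LinearMap.id + TensorProduct.map LinearMap.id Y :
            H ⊗[ℂ] H →ₗ[ℂ] H ⊗[ℂ] H))
          (Coalgebra.comul (R := ℂ) a))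
    (φ : H →ₐ[ℂ] (LaurentSeries ℂ))
    (β : H →ₗ[ℂ] (LaurentSeries ℂ))
    (hβ : ∀ x : H, β x = (HahnSeries.single (1 : ℤ) (1 : ℂ)) *
      (conv (φ.toLinearMap ∘ₗ HopfAlgebra.antipode (R := ℂ)) (φ.toLinearMap ∘ₗ Y)) x) :
    ∀ a b : H, β (a * b)
      = Coalgebra.counit (R := ℂ) b • β a + Coalgebra.counit (R := ℂ) a • β b := by
  intro a b
  have hsm : ∀ (r : ℂ) (x : LaurentSeries ℂ), r • x = HahnSeries.single (0 : ℤ) r * x :=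
    fun r x => HahnSeries.single_zero_mul_eq_smul.symm
  have halg : ∀ r : ℂ, algebraMap ℂ (LaurentSeries ℂ) r = HahnSeries.single (0 : ℤ) r := by
    intro r
    have h1 : algebraMap ℂ (LaurentSeries ℂ) r
        = HahnSeries.ofPowerSeries ℤ ℂ (PowerSeries.C r) := rfl
    rw [h1, HahnSeries.ofPowerSeries_C, HahnSeries.C_apply]
  rw [hβ, hβ, hβ, DrAux.conv_infinitesimal φ Y hYder a b, hsm, hsm, halg, halg]
  ring
end

section
/- The multiplicativity step of the previous construction: if ψ_t satisfies t(d/dt)ψ_t = ψ_t ⋆ α_t with α_t an infinitesimal character, and ψ_t is multiplicative on all products of total degree less than n, then for indecomposable a, b with deg(a) + deg(b) = n, t(d/dt)[ψ_t(ab) − ψ_t(a)ψ_t(b)] = 0 and hence (with matching initial conditions) ψ_t(ab) = ψ_t(a)ψ_t(b). -/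
open TensorProduct

variable {H : Type*} [CommRing H] [HopfAlgebra ℂ H]

/-- An infinitesimal character: `α(ab) = α(a)ε(b) + ε(a)α(b)`. -/
def IsInfChar {A : Type*} [CommRing A] [Algebra ℂ A] (α : H →ₗ[ℂ] A) : Prop :=
  ∀ a b : H, α (a * b)
    = Coalgebra.counit (R := ℂ) b • α a + Coalgebra.counit (R := ℂ) a • α b

/-- An element is indecomposable if it is not a product of two elements of the
augmentation ideal. -/
def Indecomposable (x : H) : Prop :=
  ∀ u v : H, Coalgebra.counit (R := ℂ) u = 0 → Coalgebra.counit (R := ℂ) v = 0 →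
    x ≠ u * v

/-!
Differentiating the defect `ψ_t(ab) − ψ_t(a)ψ_t(b)` with the ODE leaves `t⁻¹` times
`(ψ_t ⋆ α_t)(ab) − ψ_t(b) (ψ_t ⋆ α_t)(a) − ψ_t(a) (ψ_t ⋆ α_t)(b)`. Since `Δ(ab) = Δa Δb` and
`α_t` is an infinitesimal character, the convolution `(ψ ⋆ α)(ab) = Σ ψ(a₁b₁) α(a₂b₂)` splits
into `Σ ψ(a₁b) α(a₂) + Σ ψ(ab₁) α(b₂)`. Terms with `a₂` (resp. `b₂`) of degree `0` vanish because
`α(1) = 0`, and in the others `deg a₁ + deg b < n`, so multiplicativity below degree `n` gives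
`ψ(a₁b) = ψ(a₁) ψ(b)`. Thus the defect has zero derivative on the connected set `t > 0`.
-/

namespace IsInfChar

variable {A : Type*} [CommRing A] [Algebra ℂ A] {α : H →ₗ[ℂ] A}

theorem map_one (hα : IsInfChar α) : α 1 = 0 := by
  simpa [Bialgebra.counit_one] using hα 1 1

theorem map_algebraMap (hα : IsInfChar α) (r : ℂ) : α (algebraMap ℂ H r) = 0 := by
  rw [Algebra.algebraMap_eq_smul_one, map_smul, hα.map_one, smul_zero]

end IsInfChar

section Convolution

variable {A : Type*} [CommRing A] [Algebra ℂ A]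

noncomputable def convTensor (f g : H →ₗ[ℂ] A) : H ⊗[ℂ] H →ₗ[ℂ] A :=
  LinearMap.mul' ℂ A ∘ₗ TensorProduct.map f g

@[simp]
theorem convTensor_tmul (f g : H →ₗ[ℂ] A) (x y : H) :
    convTensor f g (x ⊗ₜ y) = f x * g y := rfl

theorem conv_apply (f g : H →ₗ[ℂ] A) (x : H) :
    conv f g x = convTensor f g (Coalgebra.comul x) := rfl

noncomputable def counitRight : H ⊗[ℂ] H →ₗ[ℂ] H ⊗[ℂ] H :=
  LinearMap.lTensor H (Algebra.linearMap ℂ H ∘ₗ Coalgebra.counit)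

@[simp]
theorem counitRight_tmul (x y : H) :
    counitRight (x ⊗ₜ[ℂ] y) = Coalgebra.counit (R := ℂ) y • (x ⊗ₜ[ℂ] (1 : H)) := by
  simp [counitRight, Algebra.algebraMap_eq_smul_one, TensorProduct.tmul_smul]

@[simp]
theorem counitRight_comul (x : H) : counitRight (Coalgebra.comul (R := ℂ) x) = x ⊗ₜ 1 := by
  rw [counitRight, LinearMap.lTensor_comp_apply, Coalgebra.lTensor_counit_comul]
  simp

-- The Leibniz rule of an infinitesimal character, lifted to `H ⊗ H`.
theorem IsInfChar.convTensor_mul {α : H →ₗ[ℂ] A} (hα : IsInfChar α) (f : H →ₗ[ℂ] A)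
    (X Y : H ⊗[ℂ] H) :
    convTensor f α (X * Y) =
      convTensor f α (X * counitRight Y) + convTensor f α (counitRight X * Y) := by
  induction X using TensorProduct.induction_on with
  | zero => simp
  | add X X' hX hX' => simp only [add_mul, map_add, hX, hX']; abel
  | tmul x₁ y₁ =>
    induction Y using TensorProduct.induction_on with
    | zero => simp
    | add Y Y' hY hY' => simp only [mul_add, map_add, hY, hY']; abel
    | tmul x₂ y₂ =>
      simp [Algebra.TensorProduct.tmul_mul_tmul, hα y₁ y₂, mul_add, add_comm]

end Convolution

section Graded

variable {A : Type*} [CommRing A] [Algebra ℂ A]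

def gradedTensor (𝒜 : ℕ → Submodule ℂ H) (m : ℕ) : Submodule ℂ (H ⊗[ℂ] H) :=
  ⨆ p : {p : ℕ × ℕ // p.1 + p.2 = m},
    LinearMap.range (TensorProduct.map ((𝒜 (p : ℕ × ℕ).1).subtype) ((𝒜 (p : ℕ × ℕ).2).subtype))

-- A term `x ⊗ y` with `deg y = 0` is killed by `α`; the other terms have `deg x < m`.
theorem convTensor_mul_tmul_one (𝒜 : ℕ → Submodule ℂ H) (hconn : 𝒜 0 = 1)
    {f α : H →ₗ[ℂ] A} (hα : IsInfChar α) {m : ℕ} {c : H}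
    (hf : ∀ i < m, ∀ x ∈ 𝒜 i, f (x * c) = f x * f c)
    {w : H ⊗[ℂ] H} (hw : w ∈ gradedTensor 𝒜 m) :
    convTensor f α (w * (c ⊗ₜ 1)) = f c * convTensor f α w := by
  let D : H ⊗[ℂ] H →ₗ[ℂ] A :=
    convTensor f α ∘ₗ LinearMap.mulRight ℂ (c ⊗ₜ 1) - LinearMap.mulLeft ℂ (f c) ∘ₗ convTensor f α
  suffices gradedTensor 𝒜 m ≤ LinearMap.ker D from sub_eq_zero.mp (this hw)
  refine iSup_le fun ⟨⟨i, j⟩, hij⟩ => LinearMap.range_le_ker_iff.mpr (TensorProduct.ext' ?_)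
  rintro ⟨x, hx⟩ ⟨y, hy⟩
  simp only [D, LinearMap.comp_apply, TensorProduct.map_tmul, Submodule.subtype_apply,
    LinearMap.sub_apply, LinearMap.mulRight_apply, LinearMap.mulLeft_apply,
    Algebra.TensorProduct.tmul_mul_tmul, mul_one, convTensor_tmul, LinearMap.zero_apply]
  rcases Nat.eq_zero_or_pos j with rfl | hj
  · obtain ⟨r, rfl⟩ := Submodule.mem_one.mp (hconn ▸ hy)
    simp [hα.map_algebraMap]
  · rw [hf i (by omega) x hx]
    ring

theorem conv_mul_of_isInfChar (𝒜 : ℕ → Submodule ℂ H) (hconn : 𝒜 0 = 1)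
    {f α : H →ₗ[ℂ] A} (hα : IsInfChar α) {p q : ℕ} {a b : H}
    (ha : Coalgebra.comul (R := ℂ) a ∈ gradedTensor 𝒜 p)
    (hb : Coalgebra.comul (R := ℂ) b ∈ gradedTensor 𝒜 q)
    (hfa : ∀ j < q, ∀ y ∈ 𝒜 j, f (y * a) = f y * f a)
    (hfb : ∀ i < p, ∀ x ∈ 𝒜 i, f (x * b) = f x * f b) :
    conv f α (a * b) = f b * conv f α a + f a * conv f α b := by
  rw [conv_apply, Bialgebra.comul_mul, hα.convTensor_mul, counitRight_comul, counitRight_comul,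
    mul_comm (a ⊗ₜ 1), convTensor_mul_tmul_one 𝒜 hconn hα hfb ha,
    convTensor_mul_tmul_one 𝒜 hconn hα hfa hb, conv_apply, conv_apply]

end Graded

theorem flow_multiplicativity_step_general
    {A : Type*} [NormedCommRing A] [NormedAlgebra ℂ A]
    (𝒜 : ℕ → Submodule ℂ H) (hconn : 𝒜 0 = 1)
    -- compatibility of the coproduct with the grading:
    (hΔ : ∀ m : ℕ, ∀ x ∈ 𝒜 m, Coalgebra.comul (R := ℂ) x ∈
      ⨆ p : {p : ℕ × ℕ // p.1 + p.2 = m},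
        LinearMap.range (TensorProduct.map ((𝒜 (p : ℕ × ℕ).1).subtype)
          ((𝒜 (p : ℕ × ℕ).2).subtype)))
    (α : ℝ → (H →ₗ[ℂ] A)) (hαchar : ∀ t : ℝ, IsInfChar (α t))
    (ψ : ℝ → (H →ₗ[ℂ] A))
    -- the ODE t(d/dt)ψ_t = ψ_t ⋆ α_t on t > 0:
    (hODE : ∀ x : H, ∀ t ∈ Set.Ioi (0 : ℝ),
      HasDerivAt (fun s : ℝ => ψ s x) (((t : ℂ))⁻¹ • ((conv (ψ t) (α t)) x)) t)
    (n : ℕ)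
    -- ψ_t is multiplicative on all products of total degree < n:
    (hmult : ∀ t : ℝ, ∀ i j : ℕ, i + j < n → ∀ x ∈ 𝒜 i, ∀ y ∈ 𝒜 j,
      ψ t (x * y) = ψ t x * ψ t y)
    (p q : ℕ) (hpq : p + q = n)
    (a b : H) (ha : a ∈ 𝒜 p) (hb : b ∈ 𝒜 q) :
    (∀ t ∈ Set.Ioi (0 : ℝ),
      HasDerivAt (fun s : ℝ => ψ s (a * b) - ψ s a * ψ s b) 0 t) ∧
    (∀ t₀ ∈ Set.Ioi (0 : ℝ), ψ t₀ (a * b) = ψ t₀ a * ψ t₀ b →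
      ∀ t ∈ Set.Ioi (0 : ℝ), ψ t (a * b) = ψ t a * ψ t b) := by
  have hleibniz (t : ℝ) : conv (ψ t) (α t) (a * b) =
      ψ t b * conv (ψ t) (α t) a + ψ t a * conv (ψ t) (α t) b :=
    conv_mul_of_isInfChar 𝒜 hconn (hαchar t) (hΔ p a ha) (hΔ q b hb)
      (fun j hj y hy => hmult t j p (by omega) y hy a ha)
      (fun i hi x hx => hmult t i q (by omega) x hx b hb)
  have hderiv : ∀ t ∈ Set.Ioi (0 : ℝ),
      HasDerivAt (fun s : ℝ => ψ s (a * b) - ψ s a * ψ s b) 0 t := by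
    intro t ht
    refine ((hODE (a * b) t ht).sub ((hODE a t ht).mul (hODE b t ht))).congr_deriv ?_
    rw [hleibniz, smul_add, smul_mul_assoc, mul_smul_comm, mul_comm (ψ t b)]
    abel
  refine ⟨hderiv, fun t₀ ht₀ h₀ t ht => sub_eq_zero.mp ?_⟩
  rw [← sub_eq_zero.mpr h₀]
  exact isOpen_Ioi.is_const_of_deriv_eq_zero isPreconnected_Ioi
    (fun s hs => (hderiv s hs).differentiableAt.differentiableWithinAt)
    (fun s hs => (hderiv s hs).deriv) ht ht₀

/-- multiplicativity step: if `ψ_t` satisfies the ODE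
`t(d/dt)ψ_t = ψ_t ⋆ α_t` with `α_t` a family of infinitesimal characters and
`ψ_t(1) = 1`, and `ψ_t` is multiplicative on all products of total degree less
than `n`, then for indecomposable homogeneous `a, b` with
`deg(a) + deg(b) = n`, the function `t ↦ ψ_t(ab) − ψ_t(a)ψ_t(b)` has
derivative `0` (i.e. `t(d/dt)[ψ_t(ab) − ψ_t(a)ψ_t(b)] = 0`) on `t > 0`; hence,
with matching initial conditions at some `t₀ > 0`, `ψ_t(ab) = ψ_t(a)ψ_t(b)`
for all `t > 0`. -/
theorem flow_multiplicativity_step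
    {A : Type*} [NormedCommRing A] [NormedAlgebra ℂ A]
    (𝒜 : ℕ → Submodule ℂ H) [GradedAlgebra 𝒜] (hconn : 𝒜 0 = 1)
    -- compatibility of the coproduct with the grading:
    (hΔ : ∀ m : ℕ, ∀ x ∈ 𝒜 m, Coalgebra.comul (R := ℂ) x ∈
      ⨆ p : {p : ℕ × ℕ // p.1 + p.2 = m},
        LinearMap.range (TensorProduct.map ((𝒜 (p : ℕ × ℕ).1).subtype)
          ((𝒜 (p : ℕ × ℕ).2).subtype)))
    (α : ℝ → (H →ₗ[ℂ] A)) (hαchar : ∀ t : ℝ, IsInfChar (α t))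
    (ψ : ℝ → (H →ₗ[ℂ] A))
    (hψ1 : ∀ t : ℝ, ψ t 1 = 1)
    -- the ODE t(d/dt)ψ_t = ψ_t ⋆ α_t on t > 0:
    (hODE : ∀ x : H, ∀ t ∈ Set.Ioi (0 : ℝ),
      HasDerivAt (fun s : ℝ => ψ s x) (((t : ℂ))⁻¹ • ((conv (ψ t) (α t)) x)) t)
    (n : ℕ)
    -- ψ_t is multiplicative on all products of total degree < n:
    (hmult : ∀ t : ℝ, ∀ i j : ℕ, i + j < n → ∀ x ∈ 𝒜 i, ∀ y ∈ 𝒜 j,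
      ψ t (x * y) = ψ t x * ψ t y)
    (p q : ℕ) (hp : 0 < p) (hq : 0 < q) (hpq : p + q = n)
    (a b : H) (ha : a ∈ 𝒜 p) (hb : b ∈ 𝒜 q)
    (hai : Indecomposable a) (hbi : Indecomposable b) :
    (∀ t ∈ Set.Ioi (0 : ℝ),
      HasDerivAt (fun s : ℝ => ψ s (a * b) - ψ s a * ψ s b) 0 t) ∧
    (∀ t₀ ∈ Set.Ioi (0 : ℝ), ψ t₀ (a * b) = ψ t₀ a * ψ t₀ b →
      ∀ t ∈ Set.Ioi (0 : ℝ), ψ t (a * b) = ψ t a * ψ t b) :=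
  flow_multiplicativity_step_general 𝒜 hconn hΔ α hαchar ψ hODE n hmult p q hpq a b ha hb
end

section
/- Let H be a connected graded Hopf algebra and A = ℂ[z⁻¹][[z]]. For the dimensional regularization action σ_t(φ)(a) = t^{zn}φ(a) (a ∈ Hₙ), the geometric beta function β(φ) = [σ_t(φ)^{⋆−1} ⋆ t∂_t σ_t(φ)]|_{t=1} equals z·(φ^{⋆−1} ⋆ (φ∘Y)), where Y is the grading operator. -/
/-! Each coefficient of `t^{zn}` is a power of `n log t`, which vanishes at `t = 1`, so
differentiating at `t = 1` leaves only the linear term: `∂_t t^{zn}|_{t=1} = n z`. Hence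
`Dσ = z · (φ ∘ Y)` on each `Hₙ`, so on all of `H`, and multiplication by `z` commutes with
convolution because `A` is commutative. -/

open TensorProduct

variable {H : Type*} [CommRing H] [HopfAlgebra ℂ H]

/-- The formal element `t^{zn} = exp(zn·log t) = Σ_k (n log t)^k z^k / k!`
as a Laurent series in `z`, for `t ∈ ℝ_{>0}`. -/
noncomputable def tPow (t : ℝ) (n : ℕ) : LaurentSeries ℂ :=
  HahnSeries.ofPowerSeries ℤ ℂ
    (PowerSeries.mk fun k => ((n * Real.log t : ℝ) : ℂ) ^ k / (k.factorial : ℂ))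

/-- The common support bound `s` makes each coefficient of `f t * b` a finite sum over an index
set independent of `t`. -/
theorem HahnSeries.hasDerivAt_coeff_mul {𝕜 : Type*} [NontriviallyNormedField 𝕜]
    {R : Type*} [NormedCommRing R] [NormedAlgebra 𝕜 R]
    {Γ : Type*} [AddCommMonoid Γ] [PartialOrder Γ] [IsOrderedCancelAddMonoid Γ]
    {f : 𝕜 → HahnSeries Γ R} {f' : HahnSeries Γ R}
    {x : 𝕜} {s : Set Γ} (hs : s.IsPWO) (hf : ∀ t, (f t).support ⊆ s) (hf' : f'.support ⊆ s)
    (hderiv : ∀ j, HasDerivAt (fun t => (f t).coeff j) (f'.coeff j) x) (b : HahnSeries Γ R)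
    (i : Γ) : HasDerivAt (fun t => (f t * b).coeff i) ((f' * b).coeff i) x := by
  simp only [HahnSeries.coeff_mul_left' hs (hf _), HahnSeries.coeff_mul_left' hs hf']
  exact HasDerivAt.fun_sum fun ij _ => (hderiv ij.1).mul_const (b.coeff ij.2)

theorem tPow_coeff_natCast (t : ℝ) (n k : ℕ) :
    (tPow t n).coeff k = ((n * Real.log t : ℝ) : ℂ) ^ k / (k.factorial : ℂ) := by
  rw [tPow, HahnSeries.ofPowerSeries_apply_coeff, PowerSeries.coeff_mk]

theorem support_tPow_subset (t : ℝ) (n : ℕ) : (tPow t n).support ⊆ Set.Ici 0 := by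
  intro j hj
  by_contra hneg
  exact hj (HahnSeries.embDomain_of_notMem_range fun ⟨k, hk⟩ => hneg (hk ▸ Int.natCast_nonneg k))

theorem hasDerivAt_tPow_coeff (n : ℕ) (j : ℤ) :
    HasDerivAt (fun t => (tPow t n).coeff j) ((HahnSeries.single 1 (n : ℂ)).coeff j) 1 := by
  cases j with
  | ofNat k =>
    have hlog : HasDerivAt (fun t => ((n * Real.log t : ℝ) : ℂ)) n 1 := by
      simpa using ((Real.hasDerivAt_log one_ne_zero).const_mul (n : ℝ)).ofReal_comp
    have hpow := (hlog.fun_pow k).div_const (k.factorial : ℂ)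
    simp only [Real.log_one, mul_zero, Complex.ofReal_zero] at hpow
    simp_rw [Int.ofNat_eq_natCast, tPow_coeff_natCast]
    refine hpow.congr_deriv ?_
    rcases k with _ | _ | k
    · simp
    · simp
    · rw [HahnSeries.coeff_single_of_ne (by omega)]
      simp [pow_succ]
  | negSucc k =>
    have hzero (t : ℝ) : (tPow t n).coeff (Int.negSucc k) = 0 := by
      by_contra h
      exact (Int.negSucc_lt_zero k).not_ge (support_tPow_subset t n h)
    rw [HahnSeries.coeff_single_of_ne (by omega)]
    simpa only [hzero] using hasDerivAt_const (1 : ℝ) (0 : ℂ)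

theorem hasDerivAt_coeff_tPow_mul (n : ℕ) (b : LaurentSeries ℂ) (i : ℤ) :
    HasDerivAt (fun t => (tPow t n * b).coeff i) ((HahnSeries.single 1 (n : ℂ) * b).coeff i) 1 :=
  HahnSeries.hasDerivAt_coeff_mul (Set.IsWF.isPWO bddBelow_Ici.wellFoundedOn_lt)
    (support_tPow_subset · n)
    (HahnSeries.support_single_subset.trans (by simp)) (hasDerivAt_tPow_coeff n) b i

theorem conv_mulLeft_apply {A : Type*} [CommRing A] [Algebra ℂ A] (f g : H →ₗ[ℂ] A) (c : A)
    (x : H) :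
    conv f (LinearMap.mulLeft ℂ c ∘ₗ g) x = c * conv f g x := by
  simp only [conv, LinearMap.comp_apply]
  induction Coalgebra.comul (R := ℂ) x using TensorProduct.induction_on with
  | zero => simp
  | tmul u v => simp [mul_left_comm]
  | add u v hu hv => simp_all [mul_add]

theorem dr_beta_function_formula_general
    {A : Type*} [CommRing A] [Algebra ℂ A]
    -- A = ℂ[z⁻¹][[z]], with z the distinguished element zA:
    (e : A ≃ₐ[ℂ] LaurentSeries ℂ) (zA : A)
    (hzA : e zA = HahnSeries.single (1 : ℤ) (1 : ℂ))
    (𝒜 : ℕ → Submodule ℂ H) [GradedAlgebra 𝒜]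
    (Y : H →ₗ[ℂ] H) (hY : ∀ n : ℕ, ∀ a ∈ 𝒜 n, Y a = (n : ℂ) • a)
    (φ : H →ₐ[ℂ] A)
    (σ : ℝ → (H →ₗ[ℂ] A) → (H →ₗ[ℂ] A))
    -- σ_t scales the graded piece Hₙ by t^{zn}:
    (hσ : ∀ (t : ℝ) (f : H →ₗ[ℂ] A) (n : ℕ), ∀ a ∈ 𝒜 n,
      e ((σ t f) a) = tPow t n * e (f a))
    -- Dσ = t∂_t σ_t(φ)|_{t=1}, the coefficientwise derivative at t = 1:
    (Dσ : H →ₗ[ℂ] A)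
    (hDσ : ∀ (a : H) (i : ℤ),
      HasDerivAt (fun t : ℝ => (e ((σ t φ.toLinearMap) a)).coeff i)
        ((e (Dσ a)).coeff i) 1)
    -- β(φ) = [σ_t(φ)^{⋆−1} ⋆ t∂_t σ_t(φ)]|_{t=1} = φ^{⋆−1} ⋆ Dσ:
    (β : H →ₗ[ℂ] A)
    (hβ : β = conv (φ.toLinearMap ∘ₗ HopfAlgebra.antipode (R := ℂ)) Dσ) :
    ∀ x : H, β x = zA *
      (conv (φ.toLinearMap ∘ₗ HopfAlgebra.antipode (R := ℂ))
        (φ.toLinearMap ∘ₗ Y)) x := by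
  have hDσ_homogeneous (n : ℕ) (a : H) (ha : a ∈ 𝒜 n) : Dσ a = zA * φ (Y a) := by
    have hcoeff : e (Dσ a) = HahnSeries.single 1 (n : ℂ) * e (φ a) :=
      HahnSeries.ext <| funext fun i => (hDσ a i).unique <| by
        simpa only [hσ _ _ n a ha, AlgHom.toLinearMap_apply] using
          hasDerivAt_coeff_tPow_mul n (e (φ a)) i
    apply e.injective
    rw [hcoeff, map_mul, hzA, hY n a ha, map_smul φ, Algebra.smul_def, map_mul, AlgEquiv.commutes,
      LaurentSeries.algebraMap_apply, HahnSeries.C_apply, ← mul_assoc, HahnSeries.single_mul_single, add_zero, one_mul]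
  have hDσ : Dσ = LinearMap.mulLeft ℂ zA ∘ₗ φ.toLinearMap ∘ₗ Y :=
    DirectSum.decompose_lhom_ext 𝒜 fun n => LinearMap.ext fun a => hDσ_homogeneous n a a.2
  intro x
  rw [hβ, hDσ, conv_mulLeft_apply]

/-- for the dimensional regularization renormalization group
action `σ_t(φ)(a) = t^{zn}φ(a)` (`a ∈ Hₙ`) on characters
`φ : H → A = ℂ[z⁻¹][[z]]`, the geometric beta function
`β(φ) = [σ_t(φ)^{⋆−1} ⋆ t∂_t σ_t(φ)]|_{t=1}` equals `z·(φ^{⋆−1} ⋆ (φ∘Y))`,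
where `Y` is the grading operator and `φ^{⋆−1} = φ ∘ S`.  The algebra `A` is
identified with the Laurent series algebra by an algebra isomorphism `e`, and
`t∂_t σ_t(φ)|_{t=1} = ∂_t σ_t(φ)|_{t=1}` is computed coefficientwise. -/
theorem dr_beta_function_formula
    {A : Type*} [CommRing A] [Algebra ℂ A]
    -- A = ℂ[z⁻¹][[z]], with z the distinguished element zA:
    (e : A ≃ₐ[ℂ] LaurentSeries ℂ) (zA : A)
    (hzA : e zA = HahnSeries.single (1 : ℤ) (1 : ℂ))
    (𝒜 : ℕ → Submodule ℂ H) [GradedAlgebra 𝒜] (hconn : 𝒜 0 = 1)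
    (Y : H →ₗ[ℂ] H) (hY : ∀ n : ℕ, ∀ a ∈ 𝒜 n, Y a = (n : ℂ) • a)
    (φ : H →ₐ[ℂ] A)
    (σ : ℝ → (H →ₗ[ℂ] A) → (H →ₗ[ℂ] A))
    -- σ_t scales the graded piece Hₙ by t^{zn}:
    (hσ : ∀ (t : ℝ) (f : H →ₗ[ℂ] A) (n : ℕ), ∀ a ∈ 𝒜 n,
      e ((σ t f) a) = tPow t n * e (f a))
    -- Dσ = t∂_t σ_t(φ)|_{t=1}, the coefficientwise derivative at t = 1:
    (Dσ : H →ₗ[ℂ] A)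
    (hDσ : ∀ (a : H) (i : ℤ),
      HasDerivAt (fun t : ℝ => (e ((σ t φ.toLinearMap) a)).coeff i)
        ((e (Dσ a)).coeff i) 1)
    -- β(φ) = [σ_t(φ)^{⋆−1} ⋆ t∂_t σ_t(φ)]|_{t=1} = φ^{⋆−1} ⋆ Dσ:
    (β : H →ₗ[ℂ] A)
    (hβ : β = conv (φ.toLinearMap ∘ₗ HopfAlgebra.antipode (R := ℂ)) Dσ) :
    ∀ x : H, β x = zA *
      (conv (φ.toLinearMap ∘ₗ HopfAlgebra.antipode (R := ℂ))
        (φ.toLinearMap ∘ₗ Y)) x :=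
  dr_beta_function_formula_general e zA hzA 𝒜 Y hY φ σ hσ Dσ hDσ β hβ
end
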